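/- arXiv:1907.12012 — 3 statements merged into one kernel-verified Lean document; each statement's English description precedes it below -/
import Mathlib

section
/- If u is a genuine pair of singular vectors, all three deflations agree: suppose X v = σ u and Xᵀ u = σ v with σ ≠ 0 and ‖u‖ = ‖v‖ = 1; then Hotelling's deflation X - (uᵀXv)·u·vᵀ, projection deflation (I - uuᵀ)X(I - vvᵀ), and Schur deflation X - (Xv·uᵀX)/(uᵀXv) all equal X - σ·u·vᵀ. -/
open Matrix

theorem deflations_agree_on_singular_pair {n p : ℕ}
    (X : Matrix (Fin n) (Fin p) ℝ) (u : Fin n → ℝ) (v : Fin p → ℝ)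
    (hu : u ⬝ᵥ u = 1) (hv : v ⬝ᵥ v = 1)
    (σ : ℝ) (hσ : σ ≠ 0)
    (hXv : X *ᵥ v = σ • u) (hXu : Xᵀ *ᵥ u = σ • v) :
    X - (u ⬝ᵥ (X *ᵥ v)) • vecMulVec u v = X - σ • vecMulVec u v ∧
    (1 - vecMulVec u u) * X * (1 - vecMulVec v v) = X - σ • vecMulVec u v ∧
    X - (u ⬝ᵥ (X *ᵥ v))⁻¹ • vecMulVec (X *ᵥ v) (Xᵀ *ᵥ u) = X - σ • vecMulVec u v := by
  have hcoef : u ⬝ᵥ (X *ᵥ v) = σ := by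
    rw [hXv, dotProduct_smul, hu]; simp
  refine ⟨by rw [hcoef], ?_, ?_⟩
  · have hXvv : X * vecMulVec v v = σ • vecMulVec u v := by
      ext i j
      have h1 : (∑ k, X i k * v k) = σ * u i := by
        have := congrFun hXv i
        simpa [Matrix.mulVec, dotProduct] using this
      simp only [Matrix.mul_apply, vecMulVec_apply, Matrix.smul_apply, smul_eq_mul]
      calc (∑ k, X i k * (v k * v j)) = (∑ k, X i k * v k) * v j := by
            rw [Finset.sum_mul]; congr 1; ext k; ring
        _ = σ * (u i * v j) := by rw [h1]; ring
    have huuX : vecMulVec u u * X = σ • vecMulVec u v := by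
      ext i j
      have h1 : (∑ k, u k * X k j) = σ * v j := by
        have := congrFun hXu j
        simpa [Matrix.mulVec, Matrix.transpose_apply, dotProduct, mul_comm] using this
      simp only [Matrix.mul_apply, vecMulVec_apply, Matrix.smul_apply, smul_eq_mul]
      calc (∑ k, u i * u k * X k j) = u i * (∑ k, u k * X k j) := by
            rw [Finset.mul_sum]; congr 1; ext k; ring
        _ = σ * (u i * v j) := by rw [h1]; ring
    have huvvv : vecMulVec u v * vecMulVec v v = vecMulVec u v := by
      ext i j
      simp only [Matrix.mul_apply, vecMulVec_apply]
      calc (∑ k, u i * v k * (v k * v j)) = (u i * v j) * (∑ k, v k * v k) := by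
            rw [Finset.mul_sum]; congr 1; ext k; ring
        _ = u i * v j := by
            have : (∑ k, v k * v k) = 1 := hv
            rw [this]; ring
    rw [Matrix.sub_mul, Matrix.one_mul, Matrix.sub_mul, Matrix.mul_sub, Matrix.mul_one,
      Matrix.mul_sub, Matrix.mul_one, hXvv, huuX, Matrix.smul_mul, huvvv]
    abel
  · rw [hcoef, hXv, hXu]
    ext i j
    simp only [Matrix.sub_apply, Matrix.smul_apply, vecMulVec_apply, Pi.smul_apply,
      smul_eq_mul]
    field_simp
end

section
/- Trace maximization over the Stiefel manifold (von Neumann / Procrustes fact): let M ∈ R^{n×k} (k ≤ n) have singular value decomposition M = U·D·Vᵀ with U ∈ R^{n×k} having orthonormal columns, D diagonal with nonnegative entries, and V ∈ R^{k×k} orthogonal. Then for every X ∈ R^{n×k} with XᵀX = I_k, tr(XᵀM) ≤ tr(D), with equality attained at X = U·Vᵀ. -/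
open Matrix

theorem stiefel_trace_maximization {n k : ℕ}
    (M : Matrix (Fin n) (Fin k) ℝ)
    (U : Matrix (Fin n) (Fin k) ℝ) (D : Matrix (Fin k) (Fin k) ℝ)
    (V : Matrix (Fin k) (Fin k) ℝ)
    (hM : M = U * D * Vᵀ)
    (hU : Uᵀ * U = 1)
    (hV₁ : Vᵀ * V = 1) (hV₂ : V * Vᵀ = 1)
    (hDdiag : ∀ i j, i ≠ j → D i j = 0)
    (hDpos : ∀ i, 0 ≤ D i i) :
    (∀ X : Matrix (Fin n) (Fin k) ℝ, Xᵀ * X = 1 → (Xᵀ * M).trace ≤ D.trace) ∧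
    ((U * Vᵀ)ᵀ * M).trace = D.trace := by
  constructor
  · intro X hX
    set Y : Matrix (Fin n) (Fin k) ℝ := X * V with hY
    set B : Matrix (Fin k) (Fin k) ℝ := Yᵀ * U with hB
    have hYY : Yᵀ * Y = 1 := by
      rw [hY, transpose_mul, Matrix.mul_assoc Vᵀ Xᵀ (X * V),
        ← Matrix.mul_assoc Xᵀ X V, hX, Matrix.one_mul, hV₁]
    have h1 : (Xᵀ * M).trace = (B * D).trace := by
      rw [hM, hB, hY, transpose_mul]
      calc (Xᵀ * (U * D * Vᵀ)).trace
          = ((U * D * Vᵀ) * Xᵀ).trace := trace_mul_comm _ _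
        _ = ((U * D) * (Vᵀ * Xᵀ)).trace := by rw [Matrix.mul_assoc]
        _ = ((Vᵀ * Xᵀ) * (U * D)).trace := trace_mul_comm _ _
        _ = ((Vᵀ * Xᵀ * U) * D).trace := by rw [← Matrix.mul_assoc]
    have hYcol : ∀ i, ∑ a, Y a i * Y a i = 1 := by
      intro i
      have h := congrFun (congrFun hYY i) i
      simpa [Matrix.mul_apply, Matrix.one_apply] using h
    have hUcol : ∀ i, ∑ a, U a i * U a i = 1 := by
      intro i
      have h := congrFun (congrFun hU i) i
      simpa [Matrix.mul_apply, Matrix.one_apply] using h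
    have hBii : ∀ i, B i i ≤ 1 := by
      intro i
      have hBeq : B i i = ∑ a, Y a i * U a i := by
        rw [hB]; simp [Matrix.mul_apply]
      have hcs := Finset.sum_mul_sq_le_sq_mul_sq Finset.univ
        (fun a => Y a i) (fun a => U a i)
      simp only [sq] at hcs
      rw [hYcol i, hUcol i, one_mul] at hcs
      nlinarith [hcs, hBeq]
    rw [h1]
    have htr : (B * D).trace = ∑ i, B i i * D i i := by
      rw [Matrix.trace]
      congr 1; ext i
      rw [Matrix.diag_apply, Matrix.mul_apply]
      exact Finset.sum_eq_single i (fun j _ hj => by rw [hDdiag j i hj, mul_zero])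
        (fun h => absurd (Finset.mem_univ i) h)
    rw [htr, Matrix.trace]
    apply Finset.sum_le_sum
    intro i _
    calc B i i * D i i ≤ 1 * D i i := mul_le_mul_of_nonneg_right (hBii i) (hDpos i)
      _ = D i i := one_mul _
  · rw [hM, transpose_mul, transpose_transpose]
    calc ((V * Uᵀ) * (U * D * Vᵀ)).trace
        = ((U * D * Vᵀ) * (V * Uᵀ)).trace := trace_mul_comm _ _
      _ = ((U * D) * Uᵀ).trace := by
          rw [Matrix.mul_assoc (U * D) Vᵀ (V * Uᵀ), ← Matrix.mul_assoc Vᵀ V Uᵀ,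
            hV₁, Matrix.one_mul]
      _ = (Uᵀ * (U * D)).trace := trace_mul_comm _ _
      _ = D.trace := by rw [← Matrix.mul_assoc, hU, Matrix.one_mul]
end

section
/- Projection deflation removes at least as much signal as Hotelling's deflation in Frobenius norm: for a unit singular pair, and more generally for any unit vectors u, v, the squared Frobenius norm of the projection-deflated matrix satisfies ‖(I - uuᵀ)X(I - vvᵀ)‖_F² = ‖X‖_F² - ‖uᵀX‖² - ‖Xv‖² + (uᵀXv)² ≤ ‖X‖_F² - (uᵀXv)² = ‖X - (uᵀXv)uvᵀ‖_F²... i.e., ‖X_PD‖_F ≤ ‖X_HD‖_F, since ‖uᵀX‖² ≥ (uᵀXv)² and ‖Xv‖² ≥ (uᵀXv)² by Cauchy–Schwarz. -/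
/-
With `P = 1 - uuᵀ` and `Q = 1 - vvᵀ` orthogonal projections, `‖P M‖_F² = ‖M‖_F² - ‖Mᵀu‖²`
and `‖M Q‖_F² = ‖M‖_F² - ‖Mv‖²`. Applying the second to `M = P X` and using
`P X v = Xv - (uᵀXv) u` gives the expansion of `‖X_PD‖_F²`, while expanding the rank-one
update gives `‖X_HD‖_F² = ‖X‖_F² - (uᵀXv)²`. The comparison then reduces to
`(uᵀXv)² ≤ ‖Xv‖²` and `(uᵀXv)² ≤ ‖Xᵀu‖²`, i.e. Cauchy–Schwarz against a unit vector, which is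
itself the nonnegativity of `‖P w‖²`.
-/

open Matrix

section RankOne

variable {R m n : Type*} [CommRing R]

theorem transpose_one_sub_vecMulVec_self [DecidableEq m] (u : m → R) :
    (1 - vecMulVec u u)ᵀ = 1 - vecMulVec u u := by
  rw [transpose_sub, transpose_one, transpose_vecMulVec]

variable [Fintype m] [Fintype n]

theorem trace_transpose_mul_self_sub_vecMulVec (X : Matrix m n R) (a : m → R) (b : n → R) :
    ((X - vecMulVec a b)ᵀ * (X - vecMulVec a b)).trace =
      (Xᵀ * X).trace - 2 * (a ⬝ᵥ X *ᵥ b) + (a ⬝ᵥ a) * (b ⬝ᵥ b) := by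
  have hcross : (Xᵀ * vecMulVec a b).trace = a ⬝ᵥ X *ᵥ b := by
    rw [mul_vecMulVec, trace_vecMulVec, mulVec_transpose, ← dotProduct_mulVec]
  have hcross' : ((vecMulVec a b)ᵀ * X).trace = a ⬝ᵥ X *ᵥ b := by
    rw [← trace_transpose, transpose_mul, transpose_transpose, hcross]
  rw [transpose_sub, Matrix.sub_mul, Matrix.mul_sub, Matrix.mul_sub, transpose_vecMulVec,
    vecMulVec_mul_vecMulVec, trace_sub, trace_sub, trace_sub, hcross, ← transpose_vecMulVec,
    hcross', trace_vecMulVec, dotProduct_smul, smul_eq_mul]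
  ring

theorem one_sub_vecMulVec_self_mulVec [DecidableEq m] (u w : m → R) :
    (1 - vecMulVec u u) *ᵥ w = w - (u ⬝ᵥ w) • u := by
  rw [sub_mulVec, one_mulVec, vecMulVec_mulVec, op_smul_eq_smul]

theorem dotProduct_self_one_sub_vecMulVec_self_mulVec [DecidableEq m] {u : m → R}
    (hu : u ⬝ᵥ u = 1) (w : m → R) :
    ((1 - vecMulVec u u) *ᵥ w) ⬝ᵥ ((1 - vecMulVec u u) *ᵥ w) = w ⬝ᵥ w - (u ⬝ᵥ w) ^ 2 := by
  rw [one_sub_vecMulVec_self_mulVec]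
  simp only [sub_dotProduct, dotProduct_sub, smul_dotProduct, dotProduct_smul, smul_eq_mul, hu,
    dotProduct_comm w u]
  ring

theorem one_sub_vecMulVec_self_mul_self [DecidableEq m] {u : m → R} (hu : u ⬝ᵥ u = 1) :
    (1 - vecMulVec u u) * (1 - vecMulVec u u) = 1 - vecMulVec u u := by
  rw [Matrix.sub_mul, Matrix.mul_sub, Matrix.mul_sub, vecMulVec_mul_vecMulVec, hu, one_smul,
    Matrix.one_mul, Matrix.mul_one, Matrix.one_mul]
  abel

theorem trace_transpose_mul_self_one_sub_vecMulVec_mul [DecidableEq m] {u : m → R}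
    (hu : u ⬝ᵥ u = 1) (M : Matrix m n R) :
    (((1 - vecMulVec u u) * M)ᵀ * ((1 - vecMulVec u u) * M)).trace =
      (Mᵀ * M).trace - (Mᵀ *ᵥ u) ⬝ᵥ (Mᵀ *ᵥ u) := by
  rw [transpose_mul, transpose_one_sub_vecMulVec_self, Matrix.mul_assoc,
    ← Matrix.mul_assoc (1 - vecMulVec u u), one_sub_vecMulVec_self_mul_self hu, Matrix.sub_mul,
    Matrix.one_mul, Matrix.mul_sub, vecMulVec_mul, mul_vecMulVec, trace_sub, trace_vecMulVec,
    mulVec_transpose]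

theorem trace_transpose_mul_self_mul_one_sub_vecMulVec [DecidableEq n] {v : n → R}
    (hv : v ⬝ᵥ v = 1) (M : Matrix m n R) :
    ((M * (1 - vecMulVec v v))ᵀ * (M * (1 - vecMulVec v v))).trace =
      (Mᵀ * M).trace - (M *ᵥ v) ⬝ᵥ (M *ᵥ v) := by
  have h := trace_transpose_mul_self_one_sub_vecMulVec_mul hv Mᵀ
  rwa [transpose_transpose, ← transpose_one_sub_vecMulVec_self v, ← transpose_mul,
    trace_mul_comm, transpose_transpose, trace_mul_comm M] at h

theorem sq_dotProduct_le_dotProduct_self [LinearOrder R] [IsStrictOrderedRing R]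
    {u : m → R} (hu : u ⬝ᵥ u = 1) (w : m → R) : (u ⬝ᵥ w) ^ 2 ≤ w ⬝ᵥ w := by
  classical
  have h := dotProduct_self_one_sub_vecMulVec_self_mulVec hu w
  have hnonneg : 0 ≤ ((1 - vecMulVec u u) *ᵥ w) ⬝ᵥ ((1 - vecMulVec u u) *ᵥ w) :=
    Fintype.sum_nonneg fun _ => mul_self_nonneg _
  linarith

end RankOne

theorem projection_deflation_removes_more_signal {n p : ℕ}
    (X : Matrix (Fin n) (Fin p) ℝ) (u : Fin n → ℝ) (v : Fin p → ℝ)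
    (hu : u ⬝ᵥ u = 1) (hv : v ⬝ᵥ v = 1)
    (X_HD X_PD : Matrix (Fin n) (Fin p) ℝ)
    (hHD : X_HD = X - (u ⬝ᵥ (X *ᵥ v)) • vecMulVec u v)
    (hPD : X_PD = (1 - vecMulVec u u) * X * (1 - vecMulVec v v)) :
    (X_PDᵀ * X_PD).trace =
      (Xᵀ * X).trace - (Xᵀ *ᵥ u) ⬝ᵥ (Xᵀ *ᵥ u) - (X *ᵥ v) ⬝ᵥ (X *ᵥ v) +
        (u ⬝ᵥ (X *ᵥ v)) ^ 2 ∧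
    (X_PDᵀ * X_PD).trace ≤ (X_HDᵀ * X_HD).trace := by
  set c := u ⬝ᵥ (X *ᵥ v)
  have hPD_expand : (X_PDᵀ * X_PD).trace =
      (Xᵀ * X).trace - (Xᵀ *ᵥ u) ⬝ᵥ (Xᵀ *ᵥ u) - (X *ᵥ v) ⬝ᵥ (X *ᵥ v) + c ^ 2 := by
    rw [hPD, trace_transpose_mul_self_mul_one_sub_vecMulVec hv,
      trace_transpose_mul_self_one_sub_vecMulVec_mul hu, ← mulVec_mulVec,
      dotProduct_self_one_sub_vecMulVec_self_mulVec hu]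
    ring
  have hHD_expand : (X_HDᵀ * X_HD).trace = (Xᵀ * X).trace - c ^ 2 := by
    rw [hHD, ← smul_vecMulVec, trace_transpose_mul_self_sub_vecMulVec]
    simp only [smul_dotProduct, dotProduct_smul, smul_eq_mul, hu, hv]
    ring
  have hcv : c ^ 2 ≤ (X *ᵥ v) ⬝ᵥ (X *ᵥ v) := sq_dotProduct_le_dotProduct_self hu _
  have hcu : c ^ 2 ≤ (Xᵀ *ᵥ u) ⬝ᵥ (Xᵀ *ᵥ u) := by
    have hc : v ⬝ᵥ Xᵀ *ᵥ u = c := by rw [dotProduct_comm, mulVec_transpose, ← dotProduct_mulVec]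
    exact hc ▸ sq_dotProduct_le_dotProduct_self hv _
  refine ⟨hPD_expand, ?_⟩
  rw [hPD_expand, hHD_expand]
  linarith
end
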